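/- arXiv:1703.01056 — 5 statements merged into one kernel-verified Lean document; each statement's English description precedes it below -/
import Mathlib

section
/- Gauge invariance of the partition function: For any Forney-style graphical model and any gauge transformation 𝒢 (i.e., any collection of real 2×2 matrices G_{ab}, G_{ba} with G_{ab}ᵀG_{ba} = I for every edge {a,b} ∈ E), the partition function is unchanged: ∑_{x∈{0,1}^E} ∏_{a∈V} f_{a,𝒢}(x_a) = ∑_{x∈{0,1}^E} ∏_{a∈V} f_a(x_a) = Z. -/
/- STATEMENT 0: Gauge invariance of the partition function for Forney-style
graphical models.  A Forney-style GM on a finite graph is encoded by a finite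
vertex type `V`, a finite edge type `E`, an endpoint map `ends : E → V × V`
(with the two endpoints of every edge distinct), and a factor
`f a : ({0,1}^E) → ℝ` at each vertex `a` which depends only on the edge
variables incident to `a`.  A gauge transformation assigns to each edge a pair
of real 2×2 matrices (one for each endpoint/side, here indexed by `Bool`)
satisfying `G_{ab}ᵀ G_{ba} = 1`.  The gauge transformed factor is
`f_{a,𝒢}(x_a) = ∑_{x'_a} f_a(x'_a) ∏_{b ∈ ∂a} G_{ab}(x_{ab}, x'_{ab})`,
encoded below on full configurations (non-incident coordinates of the
summation variable being frozen by a Kronecker delta). -/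

open Matrix

/-- The gauge transformed factor `f_{a,𝒢}`. -/
noncomputable def gaugedFactor {V E : Type*} [Fintype E] [DecidableEq V] [DecidableEq E]
    (ends : E → V × V) (f : V → (E → Fin 2) → ℝ)
    (𝒢 : E → Bool → Matrix (Fin 2) (Fin 2) ℝ) (a : V) (x : E → Fin 2) : ℝ :=
  ∑ y : E → Fin 2, f a y *
    ∏ e : E,
      if a = (ends e).1 then 𝒢 e false (x e) (y e)
      else if a = (ends e).2 then 𝒢 e true (x e) (y e)
      else if x e = y e then 1 else 0


def inc {V E : Type*} (ends : E → V × V) (i : V × E) : Prop :=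
  i.1 = (ends i.2).1 ∨ i.1 = (ends i.2).2

instance {V E : Type*} [DecidableEq V] (ends : E → V × V) : DecidablePred (inc ends) :=
  fun _ => inferInstanceAs (Decidable (_ ∨ _))

noncomputable def fill {V E : Type*} [DecidableEq V] (ends : E → V × V)
    (s : ∀ _ : {i : V × E // inc ends i}, Fin 2) (a : V) (e : E) : Fin 2 :=
  if h : inc ends (a, e) then s ⟨(a, e), h⟩ else 0

lemma key {V E : Type*} [Fintype V] [Fintype E] [DecidableEq V] [DecidableEq E]
    (ends : E → V × V) (hsimple : ∀ e, (ends e).1 ≠ (ends e).2)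
    (F : (∀ _ : {i : V × E // inc ends i}, Fin 2) → ℝ)
    (k : V → E → Fin 2 → Fin 2 → ℝ)
    (hk : ∀ a e, a ≠ (ends e).1 → a ≠ (ends e).2 → ∀ u w, k a e u w = if u = w then 1 else 0) :
    ∑ x : E → Fin 2, ∑ Y : V → (E → Fin 2),
        F (fun i => Y i.1.1 i.1.2) * ∏ a, ∏ e, k a e (x e) (Y a e)
      = ∑ s : ∀ _ : {i : V × E // inc ends i}, Fin 2, F s *
          ∏ e, ∑ v : Fin 2,
            k (ends e).1 e v (s ⟨((ends e).1, e), Or.inl rfl⟩)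
              * k (ends e).2 e v (s ⟨((ends e).2, e), Or.inr rfl⟩) := by
  classical
  set q : ((∀ _ : {i : V × E // inc ends i}, Fin 2) × (∀ _ : {i : V × E // ¬ inc ends i}, Fin 2))
      ≃ (V → E → Fin 2) :=
    (Equiv.piEquivPiSubtypeProd (inc ends) fun _ => Fin 2).symm.trans (Equiv.curry V E (Fin 2))
    with hq
  have hqval : ∀ st a e, q st a e = if h : inc ends (a, e) then st.1 ⟨(a, e), h⟩ else st.2 ⟨(a, e), h⟩ := by
    intro st a e
    simp [hq, Equiv.curry, Equiv.piEquivPiSubtypeProd_symm_apply]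
  -- reindex the Y-sum
  have step1 : ∀ x : E → Fin 2,
      ∑ Y : V → (E → Fin 2), F (fun i => Y i.1.1 i.1.2) * ∏ a, ∏ e, k a e (x e) (Y a e)
      = ∑ s : ∀ _ : {i : V × E // inc ends i}, Fin 2,
          F s * ∏ i : {i : V × E // inc ends i}, k i.1.1 i.1.2 (x i.1.2) (s i) := by
    intro x
    rw [← Equiv.sum_comp q (fun Y => F (fun i => Y i.1.1 i.1.2) * ∏ a, ∏ e, k a e (x e) (Y a e)),
      Fintype.sum_prod_type]
    apply Finset.sum_congr rfl
    intro s _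
    have hF : ∀ t, (fun i : {i : V × E // inc ends i} => q (s, t) i.1.1 i.1.2) = s := by
      intro t
      funext i
      rw [hqval]
      exact dif_pos i.2
    have hsplit : ∀ t, (∏ a, ∏ e, k a e (x e) (q (s, t) a e))
        = (∏ i : {i : V × E // inc ends i}, k i.1.1 i.1.2 (x i.1.2) (s i))
          * ∏ i : {i : V × E // ¬ inc ends i}, (if x i.1.2 = t i then (1:ℝ) else 0) := by
      intro t
      rw [← Fintype.prod_prod_type (fun i : V × E => k i.1 i.2 (x i.2) (q (s, t) i.1 i.2)),
        ← Fintype.prod_subtype_mul_prod_subtype (inc ends)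
          (fun i : V × E => k i.1 i.2 (x i.2) (q (s, t) i.1 i.2))]
      congr 1
      · apply Finset.prod_congr rfl
        intro i _
        have : q (s, t) i.1.1 i.1.2 = s i := by rw [hqval]; exact dif_pos i.2
        rw [this]
      · apply Finset.prod_congr rfl
        intro i _
        have h1 : i.1.1 ≠ (ends i.1.2).1 := fun h => i.2 (Or.inl h)
        have h2 : i.1.1 ≠ (ends i.1.2).2 := fun h => i.2 (Or.inr h)
        have : q (s, t) i.1.1 i.1.2 = t i := by rw [hqval]; exact dif_neg i.2
        rw [this, hk _ _ h1 h2]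
    have hone : ∑ t : ∀ _ : {i : V × E // ¬ inc ends i}, Fin 2,
        ∏ i : {i : V × E // ¬ inc ends i}, (if x i.1.2 = t i then (1:ℝ) else 0) = 1 := by
      have h2 := Finset.prod_univ_sum (fun _ : {i : V × E // ¬ inc ends i} => (Finset.univ : Finset (Fin 2)))
        (fun i w => if x i.1.2 = w then (1:ℝ) else 0)
      rw [Fintype.piFinset_univ] at h2
      rw [← h2]
      simp
    calc ∑ t : ∀ _ : {i : V × E // ¬ inc ends i}, Fin 2,
          F (fun i => q (s, t) i.1.1 i.1.2) * ∏ a, ∏ e, k a e (x e) (q (s, t) a e)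
        = ∑ t : ∀ _ : {i : V × E // ¬ inc ends i}, Fin 2,
            (F s * ∏ i : {i : V × E // inc ends i}, k i.1.1 i.1.2 (x i.1.2) (s i))
            * ∏ i : {i : V × E // ¬ inc ends i}, (if x i.1.2 = t i then (1:ℝ) else 0) := by
          apply Finset.sum_congr rfl; intro t _; rw [hF t, hsplit t, mul_assoc]
      _ = (F s * ∏ i : {i : V × E // inc ends i}, k i.1.1 i.1.2 (x i.1.2) (s i))
            * ∑ t : ∀ _ : {i : V × E // ¬ inc ends i}, Fin 2,
              ∏ i : {i : V × E // ¬ inc ends i}, (if x i.1.2 = t i then (1:ℝ) else 0) := by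
          rw [← Finset.mul_sum]
      _ = F s * ∏ i : {i : V × E // inc ends i}, k i.1.1 i.1.2 (x i.1.2) (s i) := by
          rw [hone, mul_one]
  trans (∑ x : E → Fin 2, ∑ s : ∀ _ : {i : V × E // inc ends i}, Fin 2,
      F s * ∏ i : {i : V × E // inc ends i}, k i.1.1 i.1.2 (x i.1.2) (s i))
  · exact Finset.sum_congr rfl fun x _ => step1 x
  rw [Finset.sum_comm]
  apply Finset.sum_congr rfl
  intro s _
  rw [← Finset.mul_sum]
  congr 1
  set β : E × Bool → {i : V × E // inc ends i} := fun eb =>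
    cond eb.2 ⟨((ends eb.1).2, eb.1), Or.inr rfl⟩ ⟨((ends eb.1).1, eb.1), Or.inl rfl⟩ with hβdef
  have hβ : Function.Bijective β := by
    constructor
    · rintro ⟨e, b⟩ ⟨e', b'⟩ h
      cases b <;> cases b' <;>
        simp only [hβdef, cond, Subtype.mk.injEq, Subtype.ext_iff, Prod.mk.injEq] at h
      · rw [h.2]
      · exact absurd (h.2 ▸ h.1) (hsimple e')
      · exact absurd (h.2 ▸ h.1) (Ne.symm (hsimple e'))
      · rw [h.2]
    · rintro ⟨⟨a, e⟩, h | h⟩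
      · exact ⟨(e, false), Subtype.ext (Prod.ext h.symm rfl)⟩
      · exact ⟨(e, true), Subtype.ext (Prod.ext h.symm rfl)⟩
  calc ∑ x : E → Fin 2, ∏ i : {i : V × E // inc ends i}, k i.1.1 i.1.2 (x i.1.2) (s i)
      = ∑ x : E → Fin 2, ∏ e,
          (k (ends e).2 e (x e) (s ⟨((ends e).2, e), Or.inr rfl⟩)
            * k (ends e).1 e (x e) (s ⟨((ends e).1, e), Or.inl rfl⟩)) := by
        apply Finset.sum_congr rfl
        intro x _
        rw [← hβ.prod_comp (fun i => k i.1.1 i.1.2 (x i.1.2) (s i)), Fintype.prod_prod_type]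
        apply Finset.prod_congr rfl
        intro e _
        rw [Fintype.prod_bool]
        simp only [hβdef, cond]
    _ = ∏ e, ∑ v : Fin 2,
          k (ends e).2 e v (s ⟨((ends e).2, e), Or.inr rfl⟩)
            * k (ends e).1 e v (s ⟨((ends e).1, e), Or.inl rfl⟩) := by
        have h2 := Finset.prod_univ_sum (fun _ : E => (Finset.univ : Finset (Fin 2)))
          (fun e v => k (ends e).2 e v (s ⟨((ends e).2, e), Or.inr rfl⟩)
            * k (ends e).1 e v (s ⟨((ends e).1, e), Or.inl rfl⟩))
        rw [Fintype.piFinset_univ] at h2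
        rw [h2]
    _ = ∏ e, ∑ v : Fin 2,
          k (ends e).1 e v (s ⟨((ends e).1, e), Or.inl rfl⟩)
            * k (ends e).2 e v (s ⟨((ends e).2, e), Or.inr rfl⟩) := by
        apply Finset.prod_congr rfl
        intro e _
        apply Finset.sum_congr rfl
        intro v _
        ring

noncomputable def kG {V E : Type*} [DecidableEq V] (ends : E → V × V)
    (𝒢 : E → Bool → Matrix (Fin 2) (Fin 2) ℝ) (a : V) (e : E) (u w : Fin 2) : ℝ :=
  if a = (ends e).1 then 𝒢 e false u w
  else if a = (ends e).2 then 𝒢 e true u w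
  else if u = w then 1 else 0

lemma master {V E : Type*} [Fintype V] [Fintype E] [DecidableEq V] [DecidableEq E]
    (ends : E → V × V) (hsimple : ∀ e, (ends e).1 ≠ (ends e).2)
    (f : V → (E → Fin 2) → ℝ)
    (hdep : ∀ a (x y : E → Fin 2),
      (∀ e, (a = (ends e).1 ∨ a = (ends e).2) → x e = y e) → f a x = f a y)
    (𝒢 : E → Bool → Matrix (Fin 2) (Fin 2) ℝ)
    (hG : ∀ e, (𝒢 e false)ᵀ * 𝒢 e true = 1) :
    ∑ x : E → Fin 2, ∏ a : V, gaugedFactor ends f 𝒢 a x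
      = ∑ s : ∀ _ : {i : V × E // inc ends i}, Fin 2,
          (∏ a, f a (fill ends s a)) *
            ∏ e, (if s ⟨((ends e).1, e), Or.inl rfl⟩ = s ⟨((ends e).2, e), Or.inr rfl⟩
              then (1:ℝ) else 0) := by
  have hk : ∀ a e, a ≠ (ends e).1 → a ≠ (ends e).2 →
      ∀ u w, kG ends 𝒢 a e u w = if u = w then 1 else 0 := by
    intro a e h1 h2 u w; simp [kG, h1, h2]
  have step0 : ∀ x : E → Fin 2, ∏ a, gaugedFactor ends f 𝒢 a x
      = ∑ Y : V → (E → Fin 2),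
          (∏ a, f a (fill ends (fun i => Y i.1.1 i.1.2) a))
            * ∏ a, ∏ e, kG ends 𝒢 a e (x e) (Y a e) := by
    intro x
    have h1 : ∏ a, gaugedFactor ends f 𝒢 a x
        = ∏ a, ∑ y : E → Fin 2, f a y * ∏ e, kG ends 𝒢 a e (x e) (y e) := rfl
    rw [h1]
    have h2 := Finset.prod_univ_sum (fun _ : V => (Finset.univ : Finset (E → Fin 2)))
      (fun a y => f a y * ∏ e, kG ends 𝒢 a e (x e) (y e))
    rw [Fintype.piFinset_univ] at h2
    rw [h2]
    apply Finset.sum_congr rfl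
    intro Y _
    rw [← Finset.prod_mul_distrib]
    apply Finset.prod_congr rfl
    intro a _
    congr 1
    apply hdep
    intro e he
    simp [fill, show inc ends (a, e) from he]
  trans (∑ x : E → Fin 2, ∑ Y : V → (E → Fin 2),
      (∏ a, f a (fill ends (fun i => Y i.1.1 i.1.2) a))
        * ∏ a, ∏ e, kG ends 𝒢 a e (x e) (Y a e))
  · exact Finset.sum_congr rfl fun x _ => step0 x
  rw [key ends hsimple (fun s => ∏ a, f a (fill ends s a)) (kG ends 𝒢) hk]
  apply Finset.sum_congr rfl
  intro s _
  congr 1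
  apply Finset.prod_congr rfl
  intro e _
  have e1 : ∀ v w, kG ends 𝒢 (ends e).1 e v w = 𝒢 e false v w := by
    intro v w; simp [kG]
  have e2 : ∀ v w, kG ends 𝒢 (ends e).2 e v w = 𝒢 e true v w := by
    intro v w; simp [kG, Ne.symm (hsimple e)]
  simp only [e1, e2]
  have hmm : ∑ v : Fin 2, 𝒢 e false v (s ⟨((ends e).1, e), Or.inl rfl⟩)
        * 𝒢 e true v (s ⟨((ends e).2, e), Or.inr rfl⟩)
      = ((𝒢 e false)ᵀ * 𝒢 e true) (s ⟨((ends e).1, e), Or.inl rfl⟩)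
          (s ⟨((ends e).2, e), Or.inr rfl⟩) := by
    rw [Matrix.mul_apply]
    simp [Matrix.transpose_apply]
  rw [hmm, hG e, Matrix.one_apply]

lemma gaugedFactor_one {V E : Type*} [Fintype E] [DecidableEq V] [DecidableEq E]
    (ends : E → V × V) (f : V → (E → Fin 2) → ℝ) (a : V) (x : E → Fin 2) :
    gaugedFactor ends f (fun _ _ => (1 : Matrix (Fin 2) (Fin 2) ℝ)) a x = f a x := by
  unfold gaugedFactor
  rw [Finset.sum_eq_single x]
  · have h1 : ∀ e : E, (if a = (ends e).1 then (1 : Matrix (Fin 2) (Fin 2) ℝ) (x e) (x e)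
        else if a = (ends e).2 then (1 : Matrix (Fin 2) (Fin 2) ℝ) (x e) (x e)
        else if x e = x e then (1:ℝ) else 0) = 1 := by
      intro e; simp [Matrix.one_apply]
    rw [Finset.prod_congr rfl fun e _ => h1 e]
    simp
  · intro y _ hy
    obtain ⟨e, he⟩ : ∃ e, x e ≠ y e := by
      by_contra h
      push_neg at h
      exact hy (funext fun e => (h e).symm)
    apply mul_eq_zero_of_right
    apply Finset.prod_eq_zero (Finset.mem_univ e)
    simp [Matrix.one_apply, he]
  · intro h; exact absurd (Finset.mem_univ x) h


/-- **Gauge invariance of the partition function**: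
`∑_{x∈{0,1}^E} ∏_{a∈V} f_{a,𝒢}(x_a) = ∑_{x∈{0,1}^E} ∏_{a∈V} f_a(x_a) = Z`. -/
theorem gauge_invariance_partition_function
    {V E : Type*} [Fintype V] [Fintype E] [DecidableEq V] [DecidableEq E]
    (ends : E → V × V) (hsimple : ∀ e, (ends e).1 ≠ (ends e).2)
    (f : V → (E → Fin 2) → ℝ)
    (hdep : ∀ a (x y : E → Fin 2),
      (∀ e, (a = (ends e).1 ∨ a = (ends e).2) → x e = y e) → f a x = f a y)
    (𝒢 : E → Bool → Matrix (Fin 2) (Fin 2) ℝ)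
    (hG : ∀ e, (𝒢 e false)ᵀ * 𝒢 e true = 1) :
    ∑ x : E → Fin 2, ∏ a : V, gaugedFactor ends f 𝒢 a x
      = ∑ x : E → Fin 2, ∏ a : V, f a x := by
  have hG1 : ∀ e : E, ((fun (_ : E) (_ : Bool) => (1 : Matrix (Fin 2) (Fin 2) ℝ)) e false)ᵀ
      * ((fun (_ : E) (_ : Bool) => (1 : Matrix (Fin 2) (Fin 2) ℝ)) e true) = 1 := by
    intro e; simp
  rw [master ends hsimple f hdep 𝒢 hG,
    ← master ends hsimple f hdep (fun _ _ => (1 : Matrix (Fin 2) (Fin 2) ℝ)) hG1]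
  apply Finset.sum_congr rfl
  intro x _
  exact Finset.prod_congr rfl fun a _ => gaugedFactor_one ends f a x
end

section
/- The G-BP objective is a lower bound on the true partition function: Let a Forney-style GM have nonnegative factors and partition function Z. For any gauge transformation 𝒢 with G_{ab}ᵀG_{ba}=I on every edge such that every transformed factor satisfies f_{a,𝒢}(x_a)≥0 for all x_a, the weight of the all-zero configuration satisfies ∏_{a∈V} f_{a,𝒢}(0,0,…,0) ≤ Z. -/
open Matrix

/-!
Since the gauged factors are nonnegative, the all-zero term is bounded by the gauged partition
function `∑ₓ ∏ₐ f_{a,𝒢}(x)`, and this equals `Z`. To see the latter, expand each gauged factor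
so that the two ends of an edge carry their own values `s, s'`; summing out the edge variable
then yields `∑ₜ G_{ab}(t, s) G_{ba}(t, s') = (G_{ab}ᵀ G_{ba})(s, s') = δ(s, s')`, which glues the
two half-edges back into a single edge variable.
-/

open Finset Function

section VertexView

variable {V E α : Type*} [DecidableEq V] (ends : E → V × V)

/-- `z e` holds one value for each of the two half-edges of `e`; `vertexView ends d z a` is the
configuration seen by `a`, with the default `d` on the edges not incident to `a`. -/
def vertexView (d : E → α) (z : E → α × α) (a : V) : E → α := fun e =>
  if a = (ends e).1 then (z e).1 else if a = (ends e).2 then (z e).2 else d e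

def DependsOnIncident {β : Type*} (f : V → (E → α) → β) : Prop :=
  ∀ a (x y : E → α), (∀ e, (a = (ends e).1 ∨ a = (ends e).2) → x e = y e) → f a x = f a y

variable {ends}

@[simp]
lemma vertexView_fst (d : E → α) (z : E → α × α) (e : E) :
    vertexView ends d z (ends e).1 e = (z e).1 := if_pos rfl

lemma vertexView_snd (hsimple : ∀ e, (ends e).1 ≠ (ends e).2) (d : E → α) (z : E → α × α)
    (e : E) : vertexView ends d z (ends e).2 e = (z e).2 := by
  simp [vertexView, (hsimple e).symm]

lemma vertexView_of_ne {a : V} {e : E} (h₁ : a ≠ (ends e).1) (h₂ : a ≠ (ends e).2)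
    (d : E → α) (z : E → α × α) : vertexView ends d z a e = d e := by
  simp [vertexView, h₁, h₂]

lemma vertexView_injective (hsimple : ∀ e, (ends e).1 ≠ (ends e).2) (d : E → α) :
    Injective (vertexView ends d) := fun z z' h => funext fun e => by
  have h₁ := congrFun (congrFun h (ends e).1) e
  have h₂ := congrFun (congrFun h (ends e).2) e
  simp only [vertexView_fst, vertexView_snd hsimple] at h₁ h₂
  exact Prod.ext h₁ h₂

lemma exists_ne_of_notMem_range_vertexView (hsimple : ∀ e, (ends e).1 ≠ (ends e).2)
    {d : E → α} {Y : V → E → α} (hY : Y ∉ Set.range (vertexView ends d)) :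
    ∃ a e, a ≠ (ends e).1 ∧ a ≠ (ends e).2 ∧ Y a e ≠ d e := by
  by_contra! h
  refine hY ⟨fun e => (Y (ends e).1 e, Y (ends e).2 e), funext fun a => funext fun e => ?_⟩
  by_cases h₁ : a = (ends e).1
  · subst h₁; simp
  by_cases h₂ : a = (ends e).2
  · subst h₂; simp [vertexView_snd hsimple]
  rw [vertexView_of_ne h₁ h₂, h a e h₁ h₂]

namespace DependsOnIncident

variable {β : Type*} {f : V → (E → α) → β}

lemma vertexView_congr (hf : DependsOnIncident ends f) (d d' : E → α) (z : E → α × α) (a : V) :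
    f a (vertexView ends d z a) = f a (vertexView ends d' z a) := by
  refine hf a _ _ fun e he => ?_
  simp only [vertexView]
  rcases he with h | h <;> simp [h]

lemma vertexView_diag (hsimple : ∀ e, (ends e).1 ≠ (ends e).2) (hf : DependsOnIncident ends f)
    (d s : E → α) (a : V) : f a (vertexView ends d (fun e => (s e, s e)) a) = f a s := by
  refine hf a _ _ fun e he => ?_
  rcases he with rfl | rfl
  · exact vertexView_fst d _ e
  · exact vertexView_snd hsimple d _ e

end DependsOnIncident

end VertexView

section MatrixSums

variable {ι n R : Type*} [Fintype ι] [DecidableEq ι] [Fintype n] [DecidableEq n] [CommSemiring R]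

lemma Matrix.sum_prod_mul_eq_prod_one_apply (A B : ι → Matrix n n R) (h : ∀ i, (A i)ᵀ * B i = 1)
    (p q : ι → n) :
    ∑ x : ι → n, ∏ i, A i (x i) (p i) * B i (x i) (q i) = ∏ i, (1 : Matrix n n R) (p i) (q i) := by
  rw [← Fintype.prod_sum fun i t => A i t (p i) * B i t (q i)]
  refine prod_congr rfl fun i _ => ?_
  rw [← h i, Matrix.mul_apply]
  rfl

lemma Matrix.sum_mul_prod_one_apply (F : (ι → n × n) → R) :
    ∑ z, F z * ∏ i, (1 : Matrix n n R) (z i).1 (z i).2 = ∑ s : ι → n, F (fun i => (s i, s i)) := by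
  symm
  refine Fintype.sum_of_injective (fun s i => (s i, s i)) ?_ _ _ ?_ fun s => ?_
  · exact fun s s' h => funext fun i => congrArg Prod.fst (congrFun h i)
  · intro z hz
    obtain ⟨i, hi⟩ : ∃ i, (z i).1 ≠ (z i).2 := by
      by_contra! h
      exact hz ⟨fun i => (z i).1, funext fun i => Prod.ext rfl (h i)⟩
    exact mul_eq_zero_of_right _ (prod_eq_zero (mem_univ i) (Matrix.one_apply_ne hi))
  · simp

end MatrixSums

section Gauge

variable {V E : Type*} [Fintype V] [Fintype E] [DecidableEq V] [DecidableEq E]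
  {ends : E → V × V} {f : V → (E → Fin 2) → ℝ} {𝒢 : E → Bool → Matrix (Fin 2) (Fin 2) ℝ}

variable (ends 𝒢) in
def gaugeKernel (a : V) (e : E) (t s : Fin 2) : ℝ :=
  if a = (ends e).1 then 𝒢 e false t s
  else if a = (ends e).2 then 𝒢 e true t s
  else if t = s then 1 else 0

omit [Fintype V] in
lemma gaugedFactor_eq_sum_prod_gaugeKernel (a : V) (x : E → Fin 2) :
    gaugedFactor ends f 𝒢 a x = ∑ y, f a y * ∏ e, gaugeKernel ends 𝒢 a e (x e) (y e) := rfl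

omit [Fintype E] [DecidableEq E] in
lemma prod_gaugeKernel_vertexView (hsimple : ∀ e, (ends e).1 ≠ (ends e).2) (x : E → Fin 2)
    (z : E → Fin 2 × Fin 2) (e : E) :
    ∏ a, gaugeKernel ends 𝒢 a e (x e) (vertexView ends x z a e)
      = 𝒢 e false (x e) (z e).1 * 𝒢 e true (x e) (z e).2 := by
  rw [Fintype.prod_eq_mul _ _ (hsimple e)]
  · simp [gaugeKernel, vertexView, (hsimple e).symm]
  · rintro a ⟨h₁, h₂⟩
    simp [gaugeKernel, vertexView_of_ne h₁ h₂, h₁, h₂]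

lemma prod_gaugedFactor_eq_sum (hsimple : ∀ e, (ends e).1 ≠ (ends e).2) (x : E → Fin 2) :
    ∏ a, gaugedFactor ends f 𝒢 a x = ∑ z : E → Fin 2 × Fin 2,
      (∏ a, f a (vertexView ends x z a)) *
        ∏ e, 𝒢 e false (x e) (z e).1 * 𝒢 e true (x e) (z e).2 := by
  -- The Kronecker kernels off the incident edges kill every term of the expanded product
  -- except those indexed by `vertexView ends x z`.
  simp only [gaugedFactor_eq_sum_prod_gaugeKernel, Fintype.prod_sum]
  symm
  refine Fintype.sum_of_injective (vertexView ends x) (vertexView_injective hsimple x) _ _ ?_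
    fun z => ?_
  · intro Y hY
    obtain ⟨a, e, h₁, h₂, hne⟩ := exists_ne_of_notMem_range_vertexView hsimple hY
    refine prod_eq_zero (mem_univ a) (mul_eq_zero_of_right _ (prod_eq_zero (mem_univ e) ?_))
    simp [gaugeKernel, h₁, h₂, Ne.symm hne]
  · simp only [← prod_gaugeKernel_vertexView hsimple (𝒢 := 𝒢) x z]
    rw [prod_mul_distrib, prod_comm]

theorem sum_prod_gaugedFactor (hsimple : ∀ e, (ends e).1 ≠ (ends e).2)
    (hf : DependsOnIncident ends f) (hG : ∀ e, (𝒢 e false)ᵀ * 𝒢 e true = 1) :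
    ∑ x, ∏ a, gaugedFactor ends f 𝒢 a x = ∑ x, ∏ a, f a x := calc
  _ = ∑ x : E → Fin 2, ∑ z : E → Fin 2 × Fin 2, (∏ a, f a (vertexView ends 0 z a)) *
        ∏ e, 𝒢 e false (x e) (z e).1 * 𝒢 e true (x e) (z e).2 := by
      refine sum_congr rfl fun x _ => ?_
      simp only [prod_gaugedFactor_eq_sum hsimple, hf.vertexView_congr x 0]
  _ = ∑ z : E → Fin 2 × Fin 2, (∏ a, f a (vertexView ends 0 z a)) *
        ∏ e, (1 : Matrix (Fin 2) (Fin 2) ℝ) (z e).1 (z e).2 := by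
      rw [sum_comm]
      simp only [← mul_sum, Matrix.sum_prod_mul_eq_prod_one_apply _ _ hG]
  _ = ∑ x, ∏ a, f a x := by
      simp only [Matrix.sum_mul_prod_one_apply, hf.vertexView_diag hsimple]

end Gauge

theorem gbp_zero_weight_le_partition_general
    {V E : Type*} [Fintype V] [Fintype E] [DecidableEq V] [DecidableEq E]
    (ends : E → V × V) (hsimple : ∀ e, (ends e).1 ≠ (ends e).2)
    (f : V → (E → Fin 2) → ℝ)
    (hdep : ∀ a (x y : E → Fin 2),
      (∀ e, (a = (ends e).1 ∨ a = (ends e).2) → x e = y e) → f a x = f a y)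
    (𝒢 : E → Bool → Matrix (Fin 2) (Fin 2) ℝ)
    (hG : ∀ e, (𝒢 e false)ᵀ * 𝒢 e true = 1)
    (hfG : ∀ a x, 0 ≤ gaugedFactor ends f 𝒢 a x) :
    ∏ a : V, gaugedFactor ends f 𝒢 a (fun _ => 0)
      ≤ ∑ x : E → Fin 2, ∏ a : V, f a x := calc
  _ ≤ ∑ x, ∏ a, gaugedFactor ends f 𝒢 a x :=
      single_le_sum (fun x _ => prod_nonneg fun a _ => hfG a x) (mem_univ _)
  _ = _ := sum_prod_gaugedFactor hsimple hdep hG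

/-- **G-BP lower bound**: `∏_{a∈V} f_{a,𝒢}(0,0,…,0) ≤ Z`. -/
theorem gbp_zero_weight_le_partition
    {V E : Type*} [Fintype V] [Fintype E] [DecidableEq V] [DecidableEq E]
    (ends : E → V × V) (hsimple : ∀ e, (ends e).1 ≠ (ends e).2)
    (f : V → (E → Fin 2) → ℝ) (hf : ∀ a x, 0 ≤ f a x)
    (hdep : ∀ a (x y : E → Fin 2),
      (∀ e, (a = (ends e).1 ∨ a = (ends e).2) → x e = y e) → f a x = f a y)
    (𝒢 : E → Bool → Matrix (Fin 2) (Fin 2) ℝ)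
    (hG : ∀ e, (𝒢 e false)ᵀ * 𝒢 e true = 1)
    (hfG : ∀ a x, 0 ≤ gaugedFactor ends f 𝒢 a x) :
    ∏ a : V, gaugedFactor ends f 𝒢 a (fun _ => 0)
      ≤ ∑ x : E → Fin 2, ∏ a : V, f a x :=
  gbp_zero_weight_le_partition_general ends hsimple f hdep 𝒢 hG hfG
end

section
/- G-BP is the special case of G-MF with the delta product distribution, hence G-MF dominates G-BP: Let q⁰ be the product distribution with q⁰_{ab}(0)=1 and q⁰_{ab}(1)=0 for every edge. For any gauge transformation 𝒢 with f_{a,𝒢}(0,0,…,0)>0 for all a∈V, the G-MF objective at (q⁰,𝒢) equals the G-BP objective ∑_{a∈V} log f_{a,𝒢}(0,0,…,0). Consequently, the supremum of the G-MF objective over feasible pairs (q,𝒢) is at least the supremum of the G-BP objective over feasible gauges 𝒢 (feasible meaning the gauge constraints G_{ab}ᵀG_{ba}=I hold and all transformed factors are nonnegative). -/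
open Matrix

/-- The G-MF objective of a product distribution `q` and a gauge `𝒢`. -/
noncomputable def gmfObjective {V E : Type*} [Fintype V] [Fintype E]
    [DecidableEq V] [DecidableEq E]
    (ends : E → V × V) (f : V → (E → Fin 2) → ℝ)
    (q : E → Fin 2 → ℝ) (𝒢 : E → Bool → Matrix (Fin 2) (Fin 2) ℝ) : ℝ :=
  (∑ a : V, ∑ x : E → Fin 2,
      (∏ e : E, q e (x e)) * Real.log (gaugedFactor ends f 𝒢 a x))
    - ∑ e : E, ∑ s : Fin 2, q e s * Real.log (q e s)

section DeltaDistribution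

variable {ι α : Type*} [DecidableEq α]

lemma prod_ite_eq_apply_eq_ite_eq [Fintype ι] (c x : ι → α) :
    (∏ i, if x i = c i then (1 : ℝ) else 0) = if x = c then 1 else 0 := by
  split_ifs with hx
  · simp [hx]
  · obtain ⟨i, hi⟩ := Function.ne_iff.mp hx
    exact Finset.prod_eq_zero (Finset.mem_univ i) (if_neg hi)

lemma sum_prod_ite_eq_mul_eq [Fintype ι] [DecidableEq ι] [Fintype α]
    (c : ι → α) (g : (ι → α) → ℝ) :
    ∑ x, (∏ i, if x i = c i then (1 : ℝ) else 0) * g x = g c := by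
  simp [prod_ite_eq_apply_eq_ite_eq]

lemma sum_ite_eq_mul_log_ite_eq [Fintype α] (c : α) :
    ∑ s, (if s = c then (1 : ℝ) else 0) * Real.log (if s = c then 1 else 0) = 0 := by
  simp

end DeltaDistribution

lemma gmfObjective_delta {V E : Type*} [Fintype V] [Fintype E] [DecidableEq V] [DecidableEq E]
    (ends : E → V × V) (f : V → (E → Fin 2) → ℝ)
    (𝒢 : E → Bool → Matrix (Fin 2) (Fin 2) ℝ) :
    gmfObjective ends f (fun _ s => if s = 0 then 1 else 0) 𝒢
      = ∑ a : V, Real.log (gaugedFactor ends f 𝒢 a (fun _ => 0)) := by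
  have h_energy (a : V) := sum_prod_ite_eq_mul_eq (fun _ : E => (0 : Fin 2))
    (fun x => Real.log (gaugedFactor ends f 𝒢 a x))
  simp only [gmfObjective, h_energy, sum_ite_eq_mul_log_ite_eq, Finset.sum_const_zero, sub_zero]

/-- **G-BP = G-MF at the delta product distribution, and G-MF dominates
G-BP.**  The delta product distribution is `q⁰_{ab}(0)=1`, `q⁰_{ab}(1)=0`.
Feasibility means the gauge constraints hold and all transformed factors are
nonnegative. -/
theorem gmf_dominates_gbp
    {V E : Type*} [Fintype V] [Fintype E] [DecidableEq V] [DecidableEq E]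
    (ends : E → V × V) (f : V → (E → Fin 2) → ℝ) :
    (∀ 𝒢 : E → Bool → Matrix (Fin 2) (Fin 2) ℝ,
      (∀ a : V, 0 < gaugedFactor ends f 𝒢 a (fun _ => 0)) →
      gmfObjective ends f (fun _ s => if s = 0 then 1 else 0) 𝒢
        = ∑ a : V, Real.log (gaugedFactor ends f 𝒢 a (fun _ => 0))) ∧
    sSup {r : EReal | ∃ 𝒢 : E → Bool → Matrix (Fin 2) (Fin 2) ℝ,
        (∀ e, (𝒢 e false)ᵀ * 𝒢 e true = 1) ∧
        (∀ a x, 0 ≤ gaugedFactor ends f 𝒢 a x) ∧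
        r = ((∑ a : V, Real.log (gaugedFactor ends f 𝒢 a (fun _ => 0)) : ℝ) : EReal)}
      ≤ sSup {r : EReal | ∃ (q : E → Fin 2 → ℝ)
          (𝒢 : E → Bool → Matrix (Fin 2) (Fin 2) ℝ),
        (∀ e s, 0 ≤ q e s) ∧ (∀ e, ∑ s : Fin 2, q e s = 1) ∧
        (∀ e, (𝒢 e false)ᵀ * 𝒢 e true = 1) ∧
        (∀ a x, 0 ≤ gaugedFactor ends f 𝒢 a x) ∧
        r = ((gmfObjective ends f q 𝒢 : ℝ) : EReal)} := by
  refine ⟨fun 𝒢 _ => gmfObjective_delta ends f 𝒢, sSup_le_sSup ?_⟩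
  rintro r ⟨𝒢, h_gauge, h_nonneg, rfl⟩
  refine ⟨fun _ s => if s = 0 then 1 else 0, 𝒢, fun _ s => ?_, fun _ => by simp, h_gauge,
    h_nonneg, by rw [gmfObjective_delta]⟩
  dsimp only
  split_ifs <;> norm_num
end

section
/- Theorem 1 (alternating cycle case): Let f_1,…,f_n (n≥2) be invertible, entrywise-nonnegative real 2×2 matrices defining a pairwise cycle GM, such that ∏_{i=1}^n det f_i < 0 (an odd number of factors have negative determinant) and Z = tr(f_1 f_2 ⋯ f_n) > 0. Then there exist real 2×2 matrices G_{i,i+1}, G_{i+1,i} for each cycle edge (indices mod n) with G_{i,i+1}ᵀ G_{i+1,i} = I, such that every gauge-transformed factor f_{i,𝒢} = G_{i,i-1}ᵀ f_i G_{i,i+1} is entrywise nonnegative and ∏_{i=1}^n f_{i,𝒢}(0,0) = Z. In particular, the optimal value of the G-MF optimization for this GM equals the exact log-partition function log Z, attained at the product distribution placing all mass on the all-zero configuration. -/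
/-
The transfer matrix `M = f 0 * ⋯ * f (n + 1)` has `det M < 0`, so it is not a scalar matrix and
is therefore similar to the companion matrix `!![tr M, -det M; 1, 0]`, which is entrywise
nonnegative because `tr M = Z > 0`. If `P⁻¹ * M * P` is that companion matrix, the gauge
`A i = f (i + 1) * ⋯ * f (n + 1) * P`, `B i = (A i)⁻¹ᵀ` telescopes: every transformed factor is
the identity except the one at vertex `0`, which is `P⁻¹ * M * P`. The product of the `(0, 0)`
entries is then `tr M = Z`.
-/

open Matrix

section Companion

variable {K : Type*} [CommRing K] (M : Matrix (Fin 2) (Fin 2) K)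

def companion : Matrix (Fin 2) (Fin 2) K := !![M.trace, -M.det; 1, 0]

def cyclicBasis (a : Fin 2 → K) : Matrix (Fin 2) (Fin 2) K :=
  of ![![a 0, (M *ᵥ a) 0 - M.trace * a 0], ![a 1, (M *ᵥ a) 1 - M.trace * a 1]]

lemma det_cyclicBasis (a : Fin 2 → K) :
    (cyclicBasis M a).det = a 0 * (M *ᵥ a) 1 - a 1 * (M *ᵥ a) 0 := by
  simp only [cyclicBasis, det_fin_two_of]
  ring

lemma mul_cyclicBasis (a : Fin 2 → K) : M * cyclicBasis M a = cyclicBasis M a * companion M := by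
  ext i j
  fin_cases i <;> fin_cases j <;>
    simp [cyclicBasis, companion, mul_apply, mulVec, dotProduct, Fin.sum_univ_two, trace_fin_two,
      det_fin_two] <;> ring

lemma exists_det_cyclicBasis_ne_zero (hM : ∀ c : K, M ≠ scalar (Fin 2) c) :
    ∃ a : Fin 2 → K, (cyclicBasis M a).det ≠ 0 := by
  by_contra! h
  have h₁₀ : M 1 0 = 0 := by simpa [det_cyclicBasis, mulVec, dotProduct] using h ![1, 0]
  have h₀₁ : M 0 1 = 0 := by simpa [det_cyclicBasis, mulVec, dotProduct] using h ![0, 1]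
  have h₁₁ : M 1 1 = M 0 0 := by
    simpa [det_cyclicBasis, mulVec, dotProduct, h₁₀, h₀₁, sub_eq_zero] using h ![1, 1]
  refine hM (M 0 0) ?_
  ext i j
  fin_cases i <;> fin_cases j <;> simp [h₁₀, h₀₁, h₁₁]

lemma ne_scalar_of_det_neg [LinearOrder K] [IsStrictOrderedRing K] (hM : M.det < 0) (c : K) :
    M ≠ scalar (Fin 2) c := by
  rintro rfl
  exact hM.not_ge (by simpa using sq_nonneg c)

lemma companion_nonneg [LinearOrder K] [IsStrictOrderedRing K] (htr : 0 ≤ M.trace)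
    (hdet : M.det ≤ 0) (a b : Fin 2) : 0 ≤ companion M a b := by
  fin_cases a <;> fin_cases b <;> simp [companion, htr, hdet]

end Companion

lemma exists_inv_mul_mul_eq_companion {K : Type*} [Field K] {M : Matrix (Fin 2) (Fin 2) K}
    (hM : ∀ c : K, M ≠ scalar (Fin 2) c) :
    ∃ P : Matrix (Fin 2) (Fin 2) K, IsUnit P ∧ P⁻¹ * M * P = companion M := by
  obtain ⟨a, ha⟩ := exists_det_cyclicBasis_ne_zero M hM
  have hP : IsUnit (cyclicBasis M a).det := ha.isUnit
  refine ⟨cyclicBasis M a, (isUnit_iff_isUnit_det _).2 hP, ?_⟩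
  rw [mul_assoc, mul_cyclicBasis, ← mul_assoc, nonsing_inv_mul _ hP, one_mul]

section CycleGauge

variable {M : Type*} [Monoid M] {n : ℕ}

def cycleGauge (f : Fin (n + 1) → M) (P : M) (i : Fin (n + 1)) : M :=
  ((List.ofFn f).drop (i + 1)).prod * P

variable (f : Fin (n + 1) → M) (P : M)

lemma mul_cycleGauge_of_ne_zero {i : Fin (n + 1)} (hi : i ≠ 0) :
    f i * cycleGauge f P i = cycleGauge f P (i - 1) := by
  have hpred : (i - 1 : Fin (n + 1)).val + 1 = i := by
    rw [Fin.coe_sub_one, if_neg hi]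
    exact Nat.sub_add_cancel (Nat.one_le_iff_ne_zero.2 (Fin.val_ne_zero_iff.2 hi))
  rw [cycleGauge, cycleGauge, hpred, List.drop_eq_getElem_cons (i := i) (by simp [i.is_le]),
    List.prod_cons, List.getElem_ofFn, mul_assoc]

lemma cycleGauge_zero_sub_one : cycleGauge f P (0 - 1) = P := by
  rw [cycleGauge, Fin.coe_sub_one, if_pos rfl, List.drop_of_length_le (by simp), List.prod_nil,
    one_mul]

lemma mul_cycleGauge_zero : f 0 * cycleGauge f P 0 = (List.ofFn f).prod * P := by
  simp [cycleGauge, ← mul_assoc, List.ofFn_succ]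

end CycleGauge

section MatrixCycleGauge

variable {m R : Type*} [Fintype m] [DecidableEq m] [CommRing R] {n : ℕ}
  {f : Fin (n + 1) → Matrix m m R} {P : Matrix m m R}

lemma isUnit_cycleGauge (hf : ∀ i, IsUnit (f i)) (hP : IsUnit P) (i : Fin (n + 1)) :
    IsUnit (cycleGauge f P i) :=
  (List.prod_isUnit fun _ hx => by
    obtain ⟨j, rfl⟩ := List.mem_ofFn.1 (List.mem_of_mem_drop hx)
    exact hf j).mul hP

lemma cycleGauge_inv_mul_mul (hA : ∀ i, IsUnit (cycleGauge f P i)) (i : Fin (n + 1)) :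
    (cycleGauge f P (i - 1))⁻¹ * f i * cycleGauge f P i =
      if i = 0 then P⁻¹ * (List.ofFn f).prod * P else 1 := by
  split_ifs with hi
  · rw [hi, mul_assoc, mul_cycleGauge_zero, cycleGauge_zero_sub_one, mul_assoc]
  · rw [mul_assoc, mul_cycleGauge_of_ne_zero f P hi,
      nonsing_inv_mul _ ((isUnit_iff_isUnit_det _).1 (hA _))]

end MatrixCycleGauge

lemma det_prod_ofFn {m R : Type*} [Fintype m] [DecidableEq m] [CommRing R] {n : ℕ}
    (f : Fin n → Matrix m m R) : (List.ofFn f).prod.det = ∏ i, (f i).det := by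
  rw [← coe_detMonoidHom, map_list_prod, List.map_ofFn, List.prod_ofFn]
  rfl

theorem alternating_cycle_gmf_exact_general (n : ℕ)
    (f : Fin (n + 2) → Matrix (Fin 2) (Fin 2) ℝ)
    (hdet : ∏ i, (f i).det < 0)
    (hZ : 0 < Matrix.trace (List.ofFn f).prod) :
    ∃ A B : Fin (n + 2) → Matrix (Fin 2) (Fin 2) ℝ,
      (∀ i, (A i)ᵀ * B i = 1) ∧
      (∀ i a b, 0 ≤ ((B (i - 1))ᵀ * f i * A i) a b) ∧
      (∏ i, ((B (i - 1))ᵀ * f i * A i) 0 0) = Matrix.trace (List.ofFn f).prod := by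
  have hf (i) : IsUnit (f i) :=
    (isUnit_iff_isUnit_det _).2 (Finset.prod_ne_zero_iff.1 hdet.ne i (Finset.mem_univ i)).isUnit
  have hdetM : (List.ofFn f).prod.det < 0 := by rwa [det_prod_ofFn]
  obtain ⟨P, hP, hPM⟩ := exists_inv_mul_mul_eq_companion (ne_scalar_of_det_neg _ hdetM)
  set A := cycleGauge f P
  have hA (i) : IsUnit (A i) := isUnit_cycleGauge hf hP i
  have hfactor (i) :
      (A (i - 1))⁻¹ * f i * A i = if i = 0 then companion (List.ofFn f).prod else 1 := by
    rw [cycleGauge_inv_mul_mul hA, hPM]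
  refine ⟨A, fun i => (A i)⁻¹ᵀ, fun i => ?_, fun i a b => ?_, ?_⟩
  · rw [← transpose_mul, nonsing_inv_mul _ ((isUnit_iff_isUnit_det _).1 (hA i)), transpose_one]
  · rw [transpose_transpose, hfactor]
    split_ifs
    · exact companion_nonneg _ hZ.le hdetM.le a b
    · exact zero_le_one_elem a b
  · simp_rw [transpose_transpose, hfactor, Fin.prod_univ_succ]
    simp [companion]

theorem alternating_cycle_gmf_exact (n : ℕ)
    (f : Fin (n + 2) → Matrix (Fin 2) (Fin 2) ℝ)
    (hinv : ∀ i, IsUnit (f i))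
    (hnonneg : ∀ i a b, 0 ≤ f i a b)
    (hdet : ∏ i, (f i).det < 0)
    (hZ : 0 < Matrix.trace (List.ofFn f).prod) :
    ∃ A B : Fin (n + 2) → Matrix (Fin 2) (Fin 2) ℝ,
      (∀ i, (A i)ᵀ * B i = 1) ∧
      (∀ i a b, 0 ≤ ((B (i - 1))ᵀ * f i * A i) a b) ∧
      (∏ i, ((B (i - 1))ᵀ * f i * A i) 0 0) = Matrix.trace (List.ofFn f).prod :=
  alternating_cycle_gmf_exact_general n f hdet hZ
end

section
/- Theorem 1 (line graph case): Consider a GM on a path a_1,…,a_n (n≥2) with edge variables x_i∈{0,1} on edges {a_i,a_{i+1}}, endpoint factors given by entrywise-nonnegative vectors u,w∈ℝ² (f_1(x_1)=u_{x_1}, f_n(x_{n-1})=w_{x_{n-1}}) and internal factors given by entrywise-nonnegative real 2×2 matrices f_2,…,f_{n-1}, so that the partition function is Z = uᵀ f_2 ⋯ f_{n-1} w; assume Z > 0. Then there exist real 2×2 matrices G_{i,i+1}, G_{i+1,i} on each path edge with G_{i,i+1}ᵀG_{i+1,i}=I such that all gauge-transformed factors are entrywise nonnegative and the product of the transformed factors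 evaluated at the all-zero configuration equals Z; in particular, the optimal value of the G-MF optimization for this GM equals log Z. -/
/-!
Let `m j = uᵀ g₀ ⋯ g_{j-1}` and `v j = g_j ⋯ g_{k-1} w` be the forward and backward messages on
edge `j`, so that `m j ⬝ᵥ v j = Z` on every edge. Gauge edge `j` by the matrix `A j` with columns
`v j`, `ε j • (m j)^⊥` and by `B j = Z⁻¹ •` the matrix with columns `m j`, `ε j • (v j)^⊥`, where
`^⊥` is rotation by a right angle and `ε j = ±1`. Orthogonality gives `(A j)ᵀ * B j = 1`, turns the
endpoint factors into `(Z, 0)` and `(1, 0)`, and every internal factor into a diagonal matrix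
`diag (1, ε i * c i * ε (i + 1) / Z)` with `c i` independent of the signs. Choosing the signs one
edge at a time makes all of these nonnegative, and the all-zero configuration then has weight `Z`.
-/

open Matrix

section Messages

variable {n R : Type*} [Fintype n] [DecidableEq n] [CommSemiring R]
  (u w : n → R) (l : List (Matrix n n R))

def forwardMessage (j : ℕ) : n → R := u ᵥ* (l.take j).prod

def backwardMessage (j : ℕ) : n → R := (l.drop j).prod *ᵥ w

@[simp] lemma forwardMessage_zero : forwardMessage u l 0 = u := by simp [forwardMessage]

@[simp] lemma backwardMessage_length : backwardMessage w l l.length = w := by simp [backwardMessage]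

lemma forwardMessage_succ {j : ℕ} (hj : j < l.length) :
    forwardMessage u l (j + 1) = forwardMessage u l j ᵥ* l[j] := by
  simp [forwardMessage, List.prod_take_succ _ _ hj]

lemma backwardMessage_eq_mulVec_succ {j : ℕ} (hj : j < l.length) :
    backwardMessage w l j = l[j] *ᵥ backwardMessage w l (j + 1) := by
  rw [backwardMessage, backwardMessage, List.drop_eq_getElem_cons hj, List.prod_cons,
    mulVec_mulVec]

lemma forwardMessage_dotProduct_backwardMessage (j : ℕ) :
    forwardMessage u l j ⬝ᵥ backwardMessage w l j = u ⬝ᵥ l.prod *ᵥ w := by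
  rw [forwardMessage, backwardMessage, ← dotProduct_mulVec, mulVec_mulVec,
    List.prod_take_mul_prod_drop]

end Messages

section Signs

variable {R : Type*} [CommRing R] [LinearOrder R] [IsStrictOrderedRing R]

lemma exists_sign_mul_mul_nonneg (c : ℕ → R) :
    ∃ ε : ℕ → R, (∀ j, ε j * ε j = 1) ∧ ∀ j, 0 ≤ ε j * c j * ε (j + 1) := by
  set σ : ℕ → R := fun j => if c j < 0 then -1 else 1
  have hσ : ∀ j, σ j * σ j = 1 := fun j => by simp only [σ]; split_ifs <;> simp
  have hε : ∀ j, (∏ i ∈ Finset.range j, σ i) * ∏ i ∈ Finset.range j, σ i = 1 := fun j => by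
    rw [← Finset.prod_mul_distrib]; exact Finset.prod_eq_one fun i _ => hσ i
  refine ⟨fun j => ∏ i ∈ Finset.range j, σ i, hε, fun j => ?_⟩
  calc (0 : R) ≤ c j * σ j := by simp only [σ]; split_ifs <;> linarith
    _ = _ := by
      dsimp only
      rw [Finset.prod_range_succ]
      linear_combination (c j * σ j) * (hε j).symm

end Signs

section Frame

variable {R : Type*} [CommRing R]

def perp (v : Fin 2 → R) : Fin 2 → R := ![-v 1, v 0]

lemma perp_dotProduct_self (v : Fin 2 → R) : perp v ⬝ᵥ v = 0 := by
  simp [perp, dotProduct, Fin.sum_univ_two]; ring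

lemma dotProduct_perp_self (v : Fin 2 → R) : v ⬝ᵥ perp v = 0 := by
  rw [dotProduct_comm, perp_dotProduct_self]

lemma perp_dotProduct_perp (x y : Fin 2 → R) : perp x ⬝ᵥ perp y = x ⬝ᵥ y := by
  simp [perp, dotProduct, Fin.sum_univ_two]; ring

def frame (x y : Fin 2 → R) (ε : R) : Matrix (Fin 2) (Fin 2) R := (of ![x, ε • perp y])ᵀ

@[simp] lemma frame_transpose_zero (x y : Fin 2 → R) (ε : R) : (frame x y ε)ᵀ 0 = x := rfl

@[simp] lemma frame_transpose_one (x y : Fin 2 → R) (ε : R) :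
    (frame x y ε)ᵀ 1 = ε • perp y := rfl

lemma frame_transpose_mulVec_self (x z : Fin 2 → R) (ε : R) :
    (frame x z ε)ᵀ *ᵥ z = ![x ⬝ᵥ z, 0] := by
  ext r
  fin_cases r <;>
    simp only [Fin.zero_eta, Fin.mk_one, mulVec, frame_transpose_zero, frame_transpose_one,
      smul_dotProduct, perp_dotProduct_self, cons_val_zero, cons_val_one, smul_zero]

lemma frame_transpose_mul_frame (x y : Fin 2 → R) {ε : R} (hε : ε * ε = 1) :
    (frame x y ε)ᵀ * frame y x ε = (y ⬝ᵥ x) • 1 := by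
  ext r c
  rw [mul_apply']
  change (frame x y ε)ᵀ r ⬝ᵥ (frame y x ε)ᵀ c = _
  fin_cases r <;> fin_cases c <;>
    simp only [Fin.zero_eta, Fin.mk_one, frame_transpose_zero, frame_transpose_one,
      Matrix.smul_apply, smul_dotProduct, dotProduct_smul, dotProduct_perp_self,
      perp_dotProduct_self, perp_dotProduct_perp, smul_eq_mul, mul_zero] <;>
    simp [dotProduct_comm x y, ← mul_assoc, hε]

lemma frame_transpose_mul_mul_frame {m v m' v' : Fin 2 → R} {g : Matrix (Fin 2) (Fin 2) R}
    (hv : g *ᵥ v' = v) (hm : m ᵥ* g = m') (ε δ : R) :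
    (frame m v ε)ᵀ * g * frame v' m' δ = !![m ⬝ᵥ v, 0; 0, ε * (perp v ⬝ᵥ g *ᵥ perp m') * δ] := by
  ext r c
  rw [mul_mul_apply]
  fin_cases r <;> fin_cases c <;>
    simp only [Fin.zero_eta, Fin.mk_one, frame_transpose_zero, frame_transpose_one, of_apply,
      cons_val_zero, cons_val_one, hv, mulVec_smul, smul_vecMul, smul_dotProduct, dotProduct_smul,
      dotProduct_mulVec _ g, hm, dotProduct_perp_self, perp_dotProduct_self, smul_eq_mul, mul_zero]
  ring

end Frame

theorem exists_nonneg_gauge_of_messages {K : Type*} [Field K] [LinearOrder K]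
    [IsStrictOrderedRing K] {k : ℕ} {u w : Fin 2 → K} {g : Fin k → Matrix (Fin 2) (Fin 2) K}
    {m v : ℕ → Fin 2 → K} {Z : K} (hZ : 0 < Z) (hm0 : m 0 = u) (hvk : v k = w)
    (hm : ∀ i : Fin k, m i ᵥ* g i = m (i + 1)) (hv : ∀ i : Fin k, g i *ᵥ v (i + 1) = v i)
    (hdot : ∀ j, m j ⬝ᵥ v j = Z) :
    ∃ A B : Fin (k + 1) → Matrix (Fin 2) (Fin 2) K,
      (∀ j, (A j)ᵀ * B j = 1) ∧
      (∀ i, 0 ≤ ((A 0)ᵀ).mulVec u i) ∧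
      (∀ (i : Fin k) (a b : Fin 2), 0 ≤ ((B i.castSucc)ᵀ * g i * A i.succ) a b) ∧
      (∀ i, 0 ≤ ((B (Fin.last k))ᵀ).mulVec w i) ∧
      ((A 0)ᵀ).mulVec u 0
          * (∏ i : Fin k, ((B i.castSucc)ᵀ * g i * A i.succ) 0 0)
          * ((B (Fin.last k))ᵀ).mulVec w 0
        = Z := by
  obtain ⟨ε, hεε, hε⟩ := exists_sign_mul_mul_nonneg fun j =>
    if h : j < k then perp (v j) ⬝ᵥ g ⟨j, h⟩ *ᵥ perp (m (j + 1)) else 0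
  have hfactor (i : Fin k) :
      (Z⁻¹ • frame (m i) (v i) (ε i))ᵀ * g i * frame (v (i + 1)) (m (i + 1)) (ε (i + 1)) =
        !![1, 0; 0, Z⁻¹ * (ε i * (perp (v i) ⬝ᵥ g i *ᵥ perp (m (i + 1))) * ε (i + 1))] := by
    rw [transpose_smul, Matrix.smul_mul, Matrix.smul_mul,
      frame_transpose_mul_mul_frame (hv i) (hm i), hdot]
    ext a b
    fin_cases a <;> fin_cases b <;> simp [hZ.ne']
  have hu_end : (frame (v 0) (m 0) (ε 0))ᵀ *ᵥ u = ![Z, 0] := by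
    rw [← hm0, frame_transpose_mulVec_self, dotProduct_comm, hdot]
  have hw_end : (Z⁻¹ • frame (m k) (v k) (ε k))ᵀ *ᵥ w = ![1, 0] := by
    rw [transpose_smul, smul_mulVec, ← hvk, frame_transpose_mulVec_self, hdot]
    ext r; fin_cases r <;> simp [hZ.ne']
  refine ⟨fun j => frame (v j) (m j) (ε j), fun j => Z⁻¹ • frame (m j) (v j) (ε j),
    fun j => ?_, fun i => ?_, fun i a b => ?_, fun i => ?_, ?_⟩
  · rw [Matrix.mul_smul, frame_transpose_mul_frame _ _ (hεε j), hdot, smul_smul,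
      inv_mul_cancel₀ hZ.ne', one_smul]
  · dsimp only; rw [Fin.val_zero, hu_end]; fin_cases i <;> simp [hZ.le]
  · have hc : 0 ≤ ε i * (perp (v i) ⬝ᵥ g i *ᵥ perp (m (i + 1))) * ε (i + 1) := by
      simpa [i.2] using hε i
    simp only [Fin.val_castSucc, Fin.val_succ, hfactor]
    fin_cases a <;> fin_cases b
    · simp
    · simp
    · simp
    · exact mul_nonneg (inv_nonneg.2 hZ.le) hc
  · dsimp only; rw [Fin.val_last, hw_end]; fin_cases i <;> simp
  · simp only [Fin.val_zero, Fin.val_last, Fin.val_castSucc, Fin.val_succ, hu_end, hw_end, hfactor]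
    simp

theorem line_graph_gmf_exact_general (k : ℕ) (u w : Fin 2 → ℝ)
    (g : Fin k → Matrix (Fin 2) (Fin 2) ℝ)
    (hZ : 0 < u ⬝ᵥ ((List.ofFn g).prod).mulVec w) :
    ∃ A B : Fin (k + 1) → Matrix (Fin 2) (Fin 2) ℝ,
      (∀ j, (A j)ᵀ * B j = 1) ∧
      (∀ i, 0 ≤ ((A 0)ᵀ).mulVec u i) ∧
      (∀ (i : Fin k) (a b : Fin 2), 0 ≤ ((B i.castSucc)ᵀ * g i * A i.succ) a b) ∧
      (∀ i, 0 ≤ ((B (Fin.last k))ᵀ).mulVec w i) ∧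
      ((A 0)ᵀ).mulVec u 0
          * (∏ i : Fin k, ((B i.castSucc)ᵀ * g i * A i.succ) 0 0)
          * ((B (Fin.last k))ᵀ).mulVec w 0
        = u ⬝ᵥ ((List.ofFn g).prod).mulVec w := by
  have hi (i : Fin k) : (i : ℕ) < (List.ofFn g).length := by simp
  refine exists_nonneg_gauge_of_messages hZ (forwardMessage_zero u _)
    (by simpa using backwardMessage_length w (List.ofFn g)) (fun i => ?_) (fun i => ?_)
    (forwardMessage_dotProduct_backwardMessage u w _)
  · simpa using (forwardMessage_succ u _ (hi i)).symm
  · simpa using (backwardMessage_eq_mulVec_succ w _ (hi i)).symm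

theorem line_graph_gmf_exact (k : ℕ) (u w : Fin 2 → ℝ)
    (hu : ∀ i, 0 ≤ u i) (hw : ∀ i, 0 ≤ w i)
    (g : Fin k → Matrix (Fin 2) (Fin 2) ℝ) (hg : ∀ i a b, 0 ≤ g i a b)
    (hZ : 0 < u ⬝ᵥ ((List.ofFn g).prod).mulVec w) :
    ∃ A B : Fin (k + 1) → Matrix (Fin 2) (Fin 2) ℝ,
      (∀ j, (A j)ᵀ * B j = 1) ∧
      (∀ i, 0 ≤ ((A 0)ᵀ).mulVec u i) ∧
      (∀ (i : Fin k) (a b : Fin 2), 0 ≤ ((B i.castSucc)ᵀ * g i * A i.succ) a b) ∧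
      (∀ i, 0 ≤ ((B (Fin.last k))ᵀ).mulVec w i) ∧
      ((A 0)ᵀ).mulVec u 0
          * (∏ i : Fin k, ((B i.castSucc)ᵀ * g i * A i.succ) 0 0)
          * ((B (Fin.last k))ᵀ).mulVec w 0
        = u ⬝ᵥ ((List.ofFn g).prod).mulVec w :=
  line_graph_gmf_exact_general k u w g hZ
end
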